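/- arXiv:1505.04395 — 2 statements merged into one kernel-verified Lean document; each statement's English description precedes it below -/
import Mathlib

section
/- Let S be a separable metric space and let {F_n} be a countable collection of closed sets in S which is a π-system and whose complements form a base of the topology. For each n and each rational ε>0 fix a Urysohn function U_{n,ε} (continuous, taking values in [0,1], equal to 0 exactly on the complement of the ε-neighborhood of F_n and equal to 1 exactly on F_n). If X_k, X are random elements of S and for every n and rational ε>0 we have E[U_{n,ε}(X_k)] → E[U_{n,ε}(X)] as k→∞, then for every bounded continuous f: S → ℝ, E[f(X_k)] → E[f(X)], i.e., X_k converges in distribution to X. -/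
/-!
Push everything forward to `S`: with `μₖ = law(Xₖ)` and `ν = law(X)` it suffices, by the
portmanteau theorem, that `ν G ≤ liminf μₖ G` for every open `G`.
Since `1_F ≤ U_{n,ε} ≤ 1_{F^ε}`, the hypothesis gives `limsup μₖ(Fₙ) ≤ ν(Fₙ^ε)`, and letting
`ε → 0` through the rationals, `limsup μₖ(Fₙ) ≤ ν(Fₙ)`; for probability measures this is
`ν(Fₙᶜ) ≤ liminf μₖ(Fₙᶜ)`. As `{Fₙ}` is a π-system, the basis `{Fₙᶜ}` is closed under finite
unions, so every open set is an increasing union of basic open sets, and continuity of `ν`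
from below extends the liminf inequality to all open sets.
-/

open MeasureTheory Filter Topology Set TopologicalSpace Metric

section LiminfBasis

variable {Ω ι : Type*} [MeasurableSpace Ω] [TopologicalSpace Ω]

theorem measure_le_liminf_of_isOpen_of_isTopologicalBasis {L : Filter ι} {μs : ι → Measure Ω}
    {ν : Measure Ω} {B : Set (Set Ω)} (hBc : B.Countable) (hB : IsTopologicalBasis B)
    (hBsup : SupClosed B) (h : ∀ s ∈ B, ν s ≤ L.liminf fun i ↦ μs i s)
    {G : Set Ω} (hG : IsOpen G) : ν G ≤ L.liminf fun i ↦ μs i G := by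
  rcases eq_empty_or_nonempty {s ∈ B | s ⊆ G} with hempty | hne
  · rw [hB.open_eq_sUnion' hG, hempty, sUnion_empty, measure_empty]
    exact zero_le
  obtain ⟨f, hf⟩ := (hBc.mono (sep_subset B _)).exists_eq_range hne
  have hGf : G = ⋃ n, f n := by rw [hB.open_eq_sUnion' hG, hf, sUnion_range]
  have hfB n : f n ∈ B ∧ f n ⊆ G := (hf ▸ mem_range_self n : f n ∈ {s ∈ B | s ⊆ G})
  have hacc : ∀ n, accumulate f n ∈ B := by
    intro n
    induction n with
    | zero => simpa using (hfB 0).1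
    | succ n ih => simpa using hBsup ih (hfB (n + 1)).1
  have haccG n : accumulate f n ⊆ G := hGf ▸ accumulate_subset_iUnion n
  refine le_of_tendsto (hGf ▸ tendsto_measure_iUnion_accumulate) (Eventually.of_forall fun n ↦ ?_)
  exact (h _ (hacc n)).trans
    (liminf_le_liminf (Eventually.of_forall fun i ↦ measure_mono (haccG n)))

end LiminfBasis

section Sandwich

variable {α : Type*} [MeasurableSpace α] {μ : Measure α} {g : α → ℝ}

theorem measure_le_ofReal_integral_of_one_le (hgi : Integrable g μ) (hg0 : 0 ≤ g) {F : Set α}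
    (hF : ∀ x ∈ F, 1 ≤ g x) : μ F ≤ ENNReal.ofReal (∫ x, g x ∂μ) := by
  rw [ofReal_integral_eq_lintegral_ofReal hgi (ae_of_all _ hg0)]
  calc μ F ≤ μ {x | 1 ≤ ENNReal.ofReal (g x)} :=
        measure_mono fun x hx ↦ by simpa using hF x hx
    _ ≤ ∫⁻ x, ENNReal.ofReal (g x) ∂μ := by
        simpa using mul_meas_ge_le_lintegral₀ hgi.1.aemeasurable.ennreal_ofReal 1

theorem ofReal_integral_le_measure_of_eq_zero (hgi : Integrable g μ) (hg0 : 0 ≤ g)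
    (hg1 : ∀ x, g x ≤ 1) {T : Set α} (hT : MeasurableSet T) (hgT : ∀ x ∉ T, g x = 0) :
    ENNReal.ofReal (∫ x, g x ∂μ) ≤ μ T := by
  rw [ofReal_integral_eq_lintegral_ofReal hgi (ae_of_all _ hg0), ← lintegral_indicator_one hT]
  refine lintegral_mono fun x ↦ ?_
  by_cases hx : x ∈ T
  · simpa [hx] using hg1 x
  · simp [hx, hgT x hx]

end Sandwich

section Urysohn

variable {S ι : Type*} [PseudoMetricSpace S] [MeasurableSpace S] [OpensMeasurableSpace S]

theorem limsup_measure_le_of_tendsto_integral_urysohn {L : Filter ι} {μs : ι → Measure S}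
    [∀ i, IsFiniteMeasure (μs i)] {ν : Measure S} [IsFiniteMeasure ν] {F : Set S}
    (hF : IsClosed F) (U : ℚ → S → ℝ)
    (hU : ∀ ε : ℚ, 0 < ε → Continuous (U ε) ∧ (∀ x, U ε x ∈ Icc (0 : ℝ) 1) ∧
      (∀ x ∉ thickening ε F, U ε x = 0) ∧ ∀ x ∈ F, U ε x = 1)
    (hconv : ∀ ε : ℚ, 0 < ε → Tendsto (fun i ↦ ∫ x, U ε x ∂μs i) L (𝓝 (∫ x, U ε x ∂ν))) :
    L.limsup (fun i ↦ μs i F) ≤ ν F := by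
  rcases L.eq_or_neBot with rfl | _
  · simp
  have hthickening : ∀ ε : ℚ, 0 < ε → L.limsup (fun i ↦ μs i F) ≤ ν (thickening ε F) := by
    intro ε hε
    obtain ⟨hc, h01, h0, h1⟩ := hU ε hε
    have hint : ∀ (μ : Measure S) [IsFiniteMeasure μ], Integrable (U ε) μ := fun μ _ ↦
      .of_bound hc.aestronglyMeasurable 1 (ae_of_all _ fun x ↦ by
        rw [Real.norm_eq_abs, abs_of_nonneg (h01 x).1]; exact (h01 x).2)
    calc L.limsup (fun i ↦ μs i F)
        ≤ L.limsup (fun i ↦ ENNReal.ofReal (∫ x, U ε x ∂μs i)) :=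
          limsup_le_limsup (Eventually.of_forall fun i ↦ measure_le_ofReal_integral_of_one_le
            (hint _) (fun x ↦ (h01 x).1) fun x hx ↦ (h1 x hx).ge)
      _ = ENNReal.ofReal (∫ x, U ε x ∂ν) :=
          ((ENNReal.continuous_ofReal.tendsto _).comp (hconv ε hε)).limsup_eq
      _ ≤ ν (thickening ε F) :=
          ofReal_integral_le_measure_of_eq_zero (hint ν) (fun x ↦ (h01 x).1) (fun x ↦ (h01 x).2)
            isOpen_thickening.measurableSet h0
  have hrat : Tendsto (fun n : ℕ ↦ (((1 : ℚ) / (n + 1) : ℚ) : ℝ)) atTop (𝓝[>] 0) := by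
    refine tendsto_nhdsWithin_iff.2 ⟨?_, Eventually.of_forall fun n ↦ ?_⟩
    · simpa using tendsto_one_div_add_atTop_nhds_zero_nat (𝕜 := ℝ)
    · simp only [mem_Ioi]; positivity
  refine ge_of_tendsto
    ((tendsto_measure_thickening_of_isClosed ⟨1, one_pos, measure_ne_top _ _⟩ hF).comp hrat)
    (Eventually.of_forall fun n ↦ hthickening _ ?_)
  positivity

end Urysohn

theorem stmt_0_general {S : Type*} [MetricSpace S]
    [MeasurableSpace S] [BorelSpace S]
    {Ω Ω' : Type*} [MeasurableSpace Ω] [MeasurableSpace Ω']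
    (P : Measure Ω) (P' : Measure Ω') [IsProbabilityMeasure P] [IsProbabilityMeasure P']
    (F : ℕ → Set S) (hFclosed : ∀ n, IsClosed (F n))
    (hpi : ∀ m n, ∃ k, F m ∩ F n = F k)
    (hbase : TopologicalSpace.IsTopologicalBasis {s : Set S | ∃ n, s = (F n)ᶜ})
    (U : ℕ → ℚ → S → ℝ)
    (hU : ∀ n (ε : ℚ), 0 < ε →
      Continuous (U n ε) ∧ (∀ x, U n ε x ∈ Set.Icc (0 : ℝ) 1) ∧
      (∀ x, U n ε x = 0 ↔ x ∉ Metric.thickening (ε : ℝ) (F n)) ∧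
      (∀ x, U n ε x = 1 ↔ x ∈ F n))
    (X : ℕ → Ω → S) (Y : Ω' → S) (hX : ∀ k, Measurable (X k)) (hY : Measurable Y)
    (hconv : ∀ n (ε : ℚ), 0 < ε →
      Tendsto (fun k => ∫ ω, U n ε (X k ω) ∂P) atTop (𝓝 (∫ ω, U n ε (Y ω) ∂P'))) :
    ∀ f : BoundedContinuousFunction S ℝ,
      Tendsto (fun k => ∫ ω, f (X k ω) ∂P) atTop (𝓝 (∫ ω, f (Y ω) ∂P')) := by
  have hμ k : IsProbabilityMeasure (P.map (X k)) :=
    Measure.isProbabilityMeasure_map (hX k).aemeasurable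
  have hν : IsProbabilityMeasure (P'.map Y) := Measure.isProbabilityMeasure_map hY.aemeasurable
  have hmapX {g : S → ℝ} (hg : Continuous g) k : ∫ x, g x ∂P.map (X k) = ∫ ω, g (X k ω) ∂P :=
    integral_map (hX k).aemeasurable hg.aestronglyMeasurable
  have hmapY {g : S → ℝ} (hg : Continuous g) : ∫ x, g x ∂P'.map Y = ∫ ω, g (Y ω) ∂P' :=
    integral_map hY.aemeasurable hg.aestronglyMeasurable
  have hclosed n : atTop.limsup (fun k ↦ P.map (X k) (F n)) ≤ P'.map Y (F n) :=
    limsup_measure_le_of_tendsto_integral_urysohn (hFclosed n) (U n)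
      (fun ε hε ↦ let ⟨hc, h01, h0, h1⟩ := hU n ε hε
        ⟨hc, h01, fun x hx ↦ (h0 x).2 hx, fun x hx ↦ (h1 x).2 hx⟩)
      fun ε hε ↦ by
        simpa only [hmapX (hU n ε hε).1, hmapY (hU n ε hε).1] using hconv n ε hε
  have hsup : SupClosed {s : Set S | ∃ n, s = (F n)ᶜ} := by
    rintro _ ⟨m, rfl⟩ _ ⟨n, rfl⟩
    obtain ⟨k, hk⟩ := hpi m n
    exact ⟨k, by rw [← hk, compl_inter]; rfl⟩
  have hcount : {s : Set S | ∃ n, s = (F n)ᶜ}.Countable :=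
    (countable_range fun n ↦ (F n)ᶜ).mono <| by rintro _ ⟨n, rfl⟩; exact mem_range_self n
  have hopen G (hG : IsOpen G) : P'.map Y G ≤ atTop.liminf fun k ↦ P.map (X k) G :=
    measure_le_liminf_of_isOpen_of_isTopologicalBasis hcount hbase hsup
      (fun _ ⟨n, hn⟩ ↦ hn ▸
        le_measure_compl_liminf_of_limsup_measure_le (hFclosed n).measurableSet (hclosed n)) hG
  let μs : ℕ → ProbabilityMeasure S := fun k ↦ ⟨P.map (X k), hμ k⟩
  let ν : ProbabilityMeasure S := ⟨P'.map Y, hν⟩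
  have hweak : Tendsto μs atTop (𝓝 ν) := tendsto_of_forall_isOpen_le_liminf' hopen
  intro f
  simpa only [μs, ν, ProbabilityMeasure.coe_mk, hmapX f.continuous, hmapY f.continuous] using
    ProbabilityMeasure.tendsto_iff_forall_integral_tendsto.1 hweak f

/-- reduction of convergence in distribution to a countable family of
Urysohn test functions associated with a co-base of closed sets forming a π-system. -/
theorem stmt_0 {S : Type*} [MetricSpace S] [TopologicalSpace.SeparableSpace S]
    [MeasurableSpace S] [BorelSpace S]
    {Ω Ω' : Type*} [MeasurableSpace Ω] [MeasurableSpace Ω']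
    (P : Measure Ω) (P' : Measure Ω') [IsProbabilityMeasure P] [IsProbabilityMeasure P']
    (F : ℕ → Set S) (hFclosed : ∀ n, IsClosed (F n))
    (hpi : ∀ m n, ∃ k, F m ∩ F n = F k)
    (hbase : TopologicalSpace.IsTopologicalBasis {s : Set S | ∃ n, s = (F n)ᶜ})
    (U : ℕ → ℚ → S → ℝ)
    (hU : ∀ n (ε : ℚ), 0 < ε →
      Continuous (U n ε) ∧ (∀ x, U n ε x ∈ Set.Icc (0 : ℝ) 1) ∧
      (∀ x, U n ε x = 0 ↔ x ∉ Metric.thickening (ε : ℝ) (F n)) ∧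
      (∀ x, U n ε x = 1 ↔ x ∈ F n))
    (X : ℕ → Ω → S) (Y : Ω' → S) (hX : ∀ k, Measurable (X k)) (hY : Measurable Y)
    (hconv : ∀ n (ε : ℚ), 0 < ε →
      Tendsto (fun k => ∫ ω, U n ε (X k ω) ∂P) atTop (𝓝 (∫ ω, U n ε (Y ω) ∂P'))) :
    ∀ f : BoundedContinuousFunction S ℝ,
      Tendsto (fun k => ∫ ω, f (X k ω) ∂P) atTop (𝓝 (∫ ω, f (Y ω) ∂P')) :=
  stmt_0_general P P' F hFclosed hpi hbase U hU X Y hX hY hconv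
end

section
/- Under the weak Hannan condition Σ_{n≥0} ‖P₀(X_{n+1} − X_n)‖₂ < ∞, the series Σ_{k=1}^{∞} ( sup_N (1/N) Σ_{j=1}^{N} E₀ T^j (P₀(X_{k+r+1} − X_{k+r}))² )^{1/2} converges P-almost surely, for every fixed r ≥ 0. Similarly, under the Hannan condition Σ_n ‖P₀X_n‖₂ < ∞, the series Σ_{k=1}^{∞} ( sup_N (1/N) Σ_{j=1}^{N} E₀ T^j (P₀ X_{k+r})² )^{1/2} converges P-a.s. -/
open MeasureTheory Filter Topology
open scoped ENNReal NNReal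

set_option linter.unusedSectionVars false
set_option maxHeartbeats 1000000

section AuxHopf

variable {Ω : Type*} {F₀ : MeasurableSpace Ω} {F : MeasurableSpace Ω} {P : Measure Ω}
  [IsProbabilityMeasure P] {T : Ω → Ω}

lemma integrable_comp_mp (hPT : MeasurePreserving T P P) {φ : Ω → ℝ}
    (hφ : Integrable φ P) : Integrable (fun ω => φ (T ω)) P :=
  memLp_one_iff_integrable.1 ((memLp_one_iff_integrable.2 hφ).comp_measurePreserving hPT)

lemma integral_comp_mp (hPT : MeasurePreserving T P P) {φ : Ω → ℝ}
    (hφ : AEStronglyMeasurable φ P) : ∫ ω, φ (T ω) ∂P = ∫ ω, φ ω ∂P := by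
  calc ∫ ω, φ (T ω) ∂P = ∫ ω, φ ω ∂(P.map T) :=
        (integral_map hPT.measurable.aemeasurable (by rwa [hPT.map_eq])).symm
  _ = ∫ ω, φ ω ∂P := by rw [hPT.map_eq]

lemma comap_le_of_measurable (hF₀ : F₀ ≤ F) {S : Ω → Ω} (hS : Measurable S) :
    F₀.comap S ≤ F := by
  rintro A ⟨B, hB, rfl⟩
  exact hS (hF₀ _ hB)

lemma memLp_two_condExp (hF₀ : F₀ ≤ F) {f : Ω → ℝ} (hf : MemLp f 2 P) :
    MemLp (P[f|F₀]) 2 P := by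
  have hfi : Integrable f P := hf.integrable one_le_two
  set fL := hf.toLp f with hfL
  have hmem : MemLp ((condExpL2 ℝ ℝ hF₀ fL : Ω →₂[P] ℝ) : Ω → ℝ) 2 P := Lp.memLp _
  refine hmem.ae_eq (ae_eq_condExp_of_forall_setIntegral_eq hF₀ hfi
      (fun s _ _ => (hmem.integrable one_le_two).integrableOn)
      (fun s hs hμs => ?_) (aestronglyMeasurable_condExpL2 hF₀ fL))
  rw [integral_condExpL2_eq hF₀ fL hs hμs.ne]
  exact setIntegral_congr_ae (hF₀ s hs) ((MemLp.coeFn_toLp hf).mono fun x hx _ => hx)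

lemma condExp_comp_aux (hPT : MeasurePreserving T P P) (hF₀ : F₀ ≤ F)
    {g : Ω → ℝ} (hg : Integrable g P) :
    (fun ω => (P[g|F₀]) (T ω)) =ᵐ[P] P[fun ω => g (T ω)|F₀.comap T] := by
  have hcm : F₀.comap T ≤ F := comap_le_of_measurable hF₀ hPT.measurable
  have hTm : Measurable[F₀.comap T, F₀] T := measurable_iff_comap_le.mpr le_rfl
  have hgT : Integrable (fun ω => g (T ω)) P := integrable_comp_mp hPT hg
  have hsm : StronglyMeasurable[F₀.comap T] fun ω => (P[g|F₀]) (T ω) :=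
    stronglyMeasurable_condExp.comp_measurable hTm
  refine (ae_eq_condExp_of_forall_setIntegral_eq hcm hgT
      (fun s _ _ => (integrable_comp_mp hPT integrable_condExp).integrableOn)
      (fun s hs _ => ?_) hsm.aestronglyMeasurable)
  obtain ⟨B, hB, rfl⟩ := hs
  have hBm : MeasurableSet B := hF₀ _ hB
  have key : ∀ (φ : Ω → ℝ), AEStronglyMeasurable φ P →
      ∫ ω in T ⁻¹' B, φ (T ω) ∂P = ∫ ω in B, φ ω ∂P := by
    intro φ hφ
    rw [← integral_indicator (hPT.measurable hBm), ← integral_indicator hBm]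
    have hind : (fun ω => (T ⁻¹' B).indicator (fun x => φ (T x)) ω)
        = fun ω => (B.indicator φ) (T ω) := by
      funext ω; by_cases hω : T ω ∈ B <;>
        simp [Set.indicator, hω, Set.mem_preimage]
    rw [hind]
    exact integral_comp_mp hPT (hφ.indicator hBm)
  rw [key _ (stronglyMeasurable_condExp.mono hF₀).aestronglyMeasurable,
      key g hg.aestronglyMeasurable]
  exact setIntegral_condExp hF₀ hg hB

private noncomputable def hopfR (S : ℕ → Ω → ℝ) : ℕ → Ω → ℝ
  | 0 => S 1
  | (N+1) => fun ω => hopfR S N ω ⊔ S (N+2) ω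

lemma sum_Icc_one_eq_range (c : ℕ → ℝ) (N : ℕ) :
    ∑ j ∈ Finset.Icc 1 (N+1), c j = ∑ j ∈ Finset.range (N+1), c (j+1) := by
  induction N with
  | zero => simp
  | succ N ih =>
    rw [Finset.sum_Icc_succ_top (by omega), ih, Finset.sum_range_succ, Finset.sum_range_succ, Finset.sum_range_succ]

lemma hopf_weak_bound (hPT : MeasurePreserving T P P) (hF₀ : F₀ ≤ F) (hfil : F₀ ≤ F₀.comap T)
    {u : Ω → ℝ} (hu_int : Integrable u P) (hu_nonneg : ∀ ω, 0 ≤ u ω) {s : ℝ} (hs : 0 < s) :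
    P {ω | ENNReal.ofReal s < ⨆ N : ℕ, ENNReal.ofReal
        ((∑ j ∈ Finset.Icc 1 (N + 1), (P[fun z => u (T^[j] z)|F₀]) ω) / (N + 1))}
      ≤ ENNReal.ofReal ((∫ ω, u ω ∂P) / s) := by
  classical
  set b : ℕ → Ω → ℝ := fun j => P[fun z => u (T^[j] z)|F₀] with hb
  have hcm : F₀.comap T ≤ F := comap_le_of_measurable hF₀ hPT.measurable
  have huT : ∀ j : ℕ, Integrable (fun z => u (T^[j] z)) P := fun j =>
    integrable_comp_mp (hPT.iterate j) hu_int
  have hb_int : ∀ j, Integrable (b j) P := fun j => integrable_condExp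
  have hb_meas : ∀ j, Measurable[F] (b j) := fun j =>
    (stronglyMeasurable_condExp.mono hF₀).measurable
  have hb_nonneg : ∀ j, 0 ≤ᵐ[P] b j := fun j =>
    condExp_nonneg (Filter.Eventually.of_forall fun z => hu_nonneg _)
  have hb_rec : ∀ j, b (j+1) =ᵐ[P] P[fun ω => b j (T ω)|F₀] := by
    intro j
    have h2 := condExp_comp_aux hPT hF₀ (huT j)
    have h3 : (fun ω => u (T^[j] (T ω))) = fun ω => u (T^[j+1] ω) := by
      funext ω; rw [Function.iterate_succ_apply]
    rw [h3] at h2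
    calc b (j+1) = P[fun ω => u (T^[j+1] ω)|F₀] := rfl
      _ =ᵐ[P] P[P[fun ω => u (T^[j+1] ω)|F₀.comap T]|F₀] :=
          (condExp_condExp_of_le hfil hcm).symm
      _ =ᵐ[P] P[fun ω => b j (T ω)|F₀] := condExp_congr_ae h2.symm
  have hb1_int_eq : ∫ ω, b 1 ω ∂P = ∫ ω, u ω ∂P := by
    rw [hb]
    simp only []
    rw [integral_condExp hF₀]
    exact integral_comp_mp (hPT.iterate 1) hu_int.aestronglyMeasurable
  set S : ℕ → Ω → ℝ := fun n ω => (∑ j ∈ Finset.range n, b (j+1) ω) - n * s with hS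
  have hS_int : ∀ n, Integrable (S n) P := fun n =>
    (integrable_finset_sum _ fun j _ => hb_int (j+1)).sub (integrable_const _)
  have hS_meas : ∀ n, Measurable[F] (S n) := fun n =>
    (Finset.measurable_sum _ fun j _ => hb_meas (j+1)).sub measurable_const
  have hR_int : ∀ N, Integrable (hopfR S N) P := by
    intro N; induction N with
    | zero => exact hS_int 1
    | succ N ih => exact ih.sup (hS_int (N+2))
  have hR_meas : ∀ N, Measurable[F] (hopfR S N) := by
    intro N; induction N with
    | zero => exact hS_meas 1
    | succ N ih => exact ih.sup (hS_meas (N+2))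
  have hR_le : ∀ N n, 1 ≤ n → n ≤ N + 1 → ∀ ω, S n ω ≤ hopfR S N ω := by
    intro N; induction N with
    | zero => intro n h1 h2 ω; have : n = 1 := by omega
              subst this; exact le_rfl
    | succ N ih =>
      intro n h1 h2 ω
      rcases Nat.lt_or_ge n (N+2) with h | h
      · exact le_trans (ih n h1 (by omega) ω) le_sup_left
      · have : n = N + 2 := by omega
        subst this; exact le_sup_right
  have ae_sum : ∀ (n : ℕ) (φ ψ : ℕ → Ω → ℝ), (∀ j, j < n → φ j =ᵐ[P] ψ j) →
      (fun ω => ∑ j ∈ Finset.range n, φ j ω) =ᵐ[P] fun ω => ∑ j ∈ Finset.range n, ψ j ω := by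
    intro n
    induction n with
    | zero => intro φ ψ _; simp
    | succ n ih =>
      intro φ ψ h
      have h1 := ih φ ψ (fun j hj => h j (by omega))
      filter_upwards [h1, h n (by omega)] with ω h1ω h2ω
      simp only [Finset.sum_range_succ, h1ω, h2ω]
  have hS_rec : ∀ n : ℕ, S (n+1) =ᵐ[P]
      fun ω => (b 1 ω - s) + (P[fun ω' => S n (T ω')|F₀]) ω := by
    intro n
    have hbT_int : ∀ j : ℕ, Integrable (fun ω' => b j (T ω')) P := fun j =>
      integrable_comp_mp hPT (hb_int j)
    have hsum_int : Integrable (fun ω' => ∑ j ∈ Finset.range n, b (j+1) (T ω')) P :=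
      integrable_finset_sum _ fun j _ => hbT_int (j+1)
    have e0 : (fun ω' => S n (T ω'))
        = (fun ω' => ∑ j ∈ Finset.range n, b (j+1) (T ω')) - (fun _ => (n : ℝ) * s) := rfl
    have h1 : P[fun ω' => S n (T ω')|F₀] =ᵐ[P]
        P[fun ω' => ∑ j ∈ Finset.range n, b (j+1) (T ω')|F₀] - P[fun _ => (n:ℝ)*s|F₀] := by
      rw [e0]; exact condExp_sub hsum_int (integrable_const _) F₀
    have h2 : P[fun ω' => ∑ j ∈ Finset.range n, b (j+1) (T ω')|F₀] =ᵐ[P]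
        fun ω => ∑ j ∈ Finset.range n, (P[fun ω' => b (j+1) (T ω')|F₀]) ω := by
      have e1 : (fun ω' => ∑ j ∈ Finset.range n, b (j+1) (T ω'))
          = ∑ j ∈ Finset.range n, fun ω' => b (j+1) (T ω') := by
        funext ω'; simp
      rw [e1]
      refine (condExp_finset_sum (fun j _ => hbT_int (j+1)) F₀).trans ?_
      apply Filter.Eventually.of_forall
      intro ω; simp
    have h3 : (fun ω => ∑ j ∈ Finset.range n, (P[fun ω' => b (j+1) (T ω')|F₀]) ω) =ᵐ[P]
        fun ω => ∑ j ∈ Finset.range n, b (j+2) ω :=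
      ae_sum n _ _ (fun j _ => (hb_rec (j+1)).symm)
    have e2 : S (n+1) = fun ω =>
        (b 1 ω - s) + ((∑ j ∈ Finset.range n, b (j+2) ω) - n * s) := by
      funext ω
      simp only [hS]
      rw [Finset.sum_range_succ']
      push_cast
      ring
    rw [e2]
    filter_upwards [h1, h2, h3] with ω hω1 hω2 hω3
    have hc : (P[fun _ => (n:ℝ)*s|F₀]) ω = (n:ℝ)*s := by
      rw [condExp_const hF₀]
    rw [hω1]
    simp only [Pi.sub_apply, hω2, hω3, hc]
  -- the per-N maximal bound
  have key : ∀ N : ℕ, P {ω | 0 < hopfR S N ω} ≤ ENNReal.ofReal ((∫ ω, u ω ∂P)/s) := by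
    intro N
    set FN : Ω → ℝ := fun ω => 0 ⊔ hopfR S N ω with hFN
    have hFN_int : Integrable FN P := (integrable_const (0:ℝ)).sup (hR_int N)
    have hFN_nonneg : ∀ ω, 0 ≤ FN ω := fun ω => le_sup_left
    have hFNT_int : Integrable (fun ω => FN (T ω)) P := integrable_comp_mp hPT hFN_int
    set QF : Ω → ℝ := P[fun ω => FN (T ω)|F₀] with hQF
    have hQF_int : Integrable QF P := integrable_condExp
    have hQF_nonneg : 0 ≤ᵐ[P] QF :=
      condExp_nonneg (Filter.Eventually.of_forall fun ω => hFN_nonneg _)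
    have hkey1 : ∀ n, 1 ≤ n → n ≤ N + 1 → S n ≤ᵐ[P] fun ω => (b 1 ω - s) + QF ω := by
      intro n h1 h2
      obtain ⟨m, rfl⟩ : ∃ m, n = m + 1 := ⟨n - 1, by omega⟩
      have hmle : ∀ ω, S m (T ω) ≤ FN (T ω) := by
        intro ω
        rcases Nat.eq_zero_or_pos m with hm | hm
        · subst hm
          have : S 0 (T ω) = 0 := by simp [hS]
          rw [this]; exact hFN_nonneg _
        · exact le_trans (hR_le N m hm (by omega) (T ω)) le_sup_right
      have hQle : P[fun ω => S m (T ω)|F₀] ≤ᵐ[P] QF :=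
        condExp_mono (integrable_comp_mp hPT (hS_int m)) hFNT_int
          (Filter.Eventually.of_forall hmle)
      filter_upwards [hS_rec m, hQle] with ω hω h2ω
      rw [hω]
      exact add_le_add le_rfl h2ω
    have hkey2 : hopfR S N ≤ᵐ[P] fun ω => (b 1 ω - s) + QF ω := by
      have hAll : ∀ M, M ≤ N → hopfR S M ≤ᵐ[P] fun ω => (b 1 ω - s) + QF ω := by
        intro M
        induction M with
        | zero => intro _; exact hkey1 1 le_rfl (by omega)
        | succ M ih =>
          intro hM
          filter_upwards [ih (by omega), hkey1 (M+2) (by omega) (by omega)] with ω hω1 hω2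
          exact sup_le hω1 hω2
      exact hAll N le_rfl
    set E : Set Ω := {ω | 0 < hopfR S N ω} with hE
    have hEm : MeasurableSet[F] E := measurableSet_lt measurable_const (hR_meas N)
    have hFN_on : ∀ ω ∈ E, FN ω = hopfR S N ω := fun ω hω => sup_eq_right.2 (le_of_lt hω)
    have hFN_off : ∀ ω ∉ E, FN ω = 0 := by
      intro ω hω
      have hle : hopfR S N ω ≤ 0 := not_lt.1 hω
      simp only [hFN]
      exact sup_eq_left.2 hle
    have hQFint_eq : ∫ ω, QF ω ∂P = ∫ ω, FN ω ∂P := by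
      rw [hQF, integral_condExp hF₀]
      exact integral_comp_mp hPT hFN_int.aestronglyMeasurable
    have hIntE_FN : ∫ ω in E, FN ω ∂P = ∫ ω, FN ω ∂P := by
      rw [← integral_indicator hEm]
      congr 1; funext ω
      by_cases hω : ω ∈ E
      · simp [Set.indicator_of_mem hω]
      · simp [Set.indicator_of_notMem hω, hFN_off ω hω]
    have step1 : ∫ ω in E, (hopfR S N ω - QF ω) ∂P ≤ ∫ ω in E, (b 1 ω - s) ∂P := by
      apply setIntegral_mono_ae ((hR_int N).sub hQF_int).integrableOn
        ((hb_int 1).sub (integrable_const s)).integrableOn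
      filter_upwards [hkey2] with ω hω
      simp only [Pi.sub_apply]
      linarith
    have step2 : (0:ℝ) ≤ ∫ ω in E, (hopfR S N ω - QF ω) ∂P := by
      rw [integral_sub (hR_int N).integrableOn hQF_int.integrableOn]
      have e1 : ∫ ω in E, hopfR S N ω ∂P = ∫ ω, FN ω ∂P := by
        rw [setIntegral_congr_fun hEm (fun ω hω => (hFN_on ω hω).symm)]
        exact hIntE_FN
      have e2 : ∫ ω in E, QF ω ∂P ≤ ∫ ω, FN ω ∂P := by
        rw [← hQFint_eq]
        exact setIntegral_le_integral hQF_int hQF_nonneg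
      linarith
    have step3 : ∫ ω in E, (b 1 ω - s) ∂P = (∫ ω in E, b 1 ω ∂P) - s * (P E).toReal := by
      rw [integral_sub (hb_int 1).integrableOn (integrable_const s).integrableOn,
        setIntegral_const, smul_eq_mul, measureReal_def]
      ring
    have step4 : ∫ ω in E, b 1 ω ∂P ≤ ∫ ω, u ω ∂P := by
      calc ∫ ω in E, b 1 ω ∂P ≤ ∫ ω, b 1 ω ∂P :=
            setIntegral_le_integral (hb_int 1) (hb_nonneg 1)
      _ = ∫ ω, u ω ∂P := hb1_int_eq
    have hsP : s * (P E).toReal ≤ ∫ ω, u ω ∂P := by linarith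
    have htr : (P E).toReal ≤ (∫ ω, u ω ∂P)/s := by
      rw [le_div_iff₀ hs]; linarith
    calc P E = ENNReal.ofReal ((P E).toReal) := (ENNReal.ofReal_toReal (measure_ne_top _ _)).symm
    _ ≤ ENNReal.ofReal ((∫ ω, u ω ∂P)/s) := ENNReal.ofReal_le_ofReal htr
  -- containment in the union
  have hsub : {ω | ENNReal.ofReal s < ⨆ N : ℕ, ENNReal.ofReal
      ((∑ j ∈ Finset.Icc 1 (N + 1), b j ω) / (N + 1))} ⊆ ⋃ N, {ω | 0 < hopfR S N ω} := by
    intro ω hω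
    simp only [Set.mem_setOf_eq, lt_iSup_iff] at hω
    obtain ⟨N, hN⟩ := hω
    have havg : s < (∑ j ∈ Finset.Icc 1 (N + 1), b j ω) / (N + 1) := by
      by_contra hcon
      exact absurd hN (not_lt.2 (ENNReal.ofReal_le_ofReal (not_lt.1 hcon)))
    have hsum' : ((N:ℝ)+1) * s < ∑ j ∈ Finset.Icc 1 (N + 1), b j ω := by
      rw [lt_div_iff₀ (by positivity)] at havg
      linarith
    have hIcc : ∑ j ∈ Finset.Icc 1 (N + 1), b j ω
        = ∑ j ∈ Finset.range (N+1), b (j+1) ω := sum_Icc_one_eq_range (fun j => b j ω) N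
    refine Set.mem_iUnion.2 ⟨N, ?_⟩
    have hSpos : 0 < S (N+1) ω := by
      have : S (N+1) ω = (∑ j ∈ Finset.range (N+1), b (j+1) ω) - ((N:ℝ)+1) * s := by
        simp only [hS]; push_cast; ring
      rw [this, ← hIcc]
      linarith
    exact lt_of_lt_of_le hSpos (hR_le N (N+1) (by omega) le_rfl ω)
  have hmono : Monotone (fun N => {ω | 0 < hopfR S N ω}) := by
    apply monotone_nat_of_le_succ
    intro N ω hω
    simp only [Set.mem_setOf_eq] at hω ⊢
    exact lt_of_lt_of_le hω le_sup_left
  refine le_trans (measure_mono hsub) ?_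
  rw [Directed.measure_iUnion hmono.directed_le]
  exact iSup_le key

lemma integral_sq_eq_sq_eLpNorm {f : Ω → ℝ} (hf : MemLp f 2 P) :
    ∫ ω, (f ω)^2 ∂P = ((eLpNorm f 2 P).toReal)^2 := by
  have h2 : eLpNorm f 2 P = (∫⁻ ω, (‖f ω‖₊ : ℝ≥0∞) ^ (2:ℝ) ∂P) ^ (1/2 : ℝ) := by
    rw [eLpNorm_eq_lintegral_rpow_enorm_toReal two_ne_zero ENNReal.ofNat_ne_top]
    norm_num
    rfl
  set I := ∫⁻ ω, (‖f ω‖₊ : ℝ≥0∞) ^ (2:ℝ) ∂P with hI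
  have hItop : I ≠ ⊤ := by
    intro h
    have h3 := hf.2
    rw [h2, h] at h3
    simp [ENNReal.top_rpow_of_pos (by norm_num : (0:ℝ) < 1/2)] at h3
  have hpt : ∀ ω : Ω, ENNReal.ofReal ((f ω)^2) = (‖f ω‖₊ : ℝ≥0∞) ^ (2:ℝ) := by
    intro ω
    rw [← enorm_eq_nnnorm, Real.enorm_eq_ofReal_abs, ENNReal.ofReal_rpow_of_nonneg (abs_nonneg _) (by norm_num)]
    congr 1
    rw [show (2:ℝ) = ((2:ℕ):ℝ) by norm_num, Real.rpow_natCast, sq_abs]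
  have hint : ∫ ω, (f ω)^2 ∂P = I.toReal := by
    rw [integral_eq_lintegral_of_nonneg_ae (Filter.Eventually.of_forall fun ω => sq_nonneg _)
      hf.integrable_sq.aestronglyMeasurable]
    congr 1
    exact lintegral_congr hpt
  rw [hint, h2, ← ENNReal.toReal_rpow]
  rw [← Real.rpow_natCast (I.toReal ^ (1/2:ℝ)) 2, ← Real.rpow_mul ENNReal.toReal_nonneg]
  norm_num

lemma lintegral_le_of_weak_sq {D : Ω → ℝ≥0∞} (hD : Measurable[F] D) {c : ℝ} (hc : 0 ≤ c)
    (hw : ∀ t : ℝ, 0 < t → P {ω | ENNReal.ofReal t < D ω} ≤ ENNReal.ofReal (c / t^2))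
    {t : ℝ} (ht : 0 < t) :
    ∫⁻ ω, D ω ∂P ≤ ENNReal.ofReal t + ENNReal.ofReal (4 * c / t) := by
  classical
  have hmeasSet : ∀ r : ℝ, MeasurableSet[F] {ω | ENNReal.ofReal r < D ω} :=
    fun r => measurableSet_lt measurable_const hD
  set G : Ω → ℝ≥0∞ := fun ω => ∑' m : ℕ,
    ({ω' | ENNReal.ofReal (t * 2^m) < D ω'}).indicator
      (fun _ => ENNReal.ofReal (t * 2^(m+1))) ω with hG
  have hpt : ∀ ω, D ω ≤ ENNReal.ofReal t + G ω := by
    intro ω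
    rcases le_or_gt (D ω) (ENNReal.ofReal t) with hle | hlt
    · exact le_trans hle le_self_add
    rcases eq_or_ne (D ω) ⊤ with htop | hfin
    · have hall : ∀ m : ℕ, ({ω' | ENNReal.ofReal (t * 2^m) < D ω'}).indicator
          (fun _ => ENNReal.ofReal (t * 2^(m+1))) ω = ENNReal.ofReal (t * 2^(m+1)) := by
        intro m
        apply Set.indicator_of_mem
        simp only [Set.mem_setOf_eq, htop]
        exact ENNReal.ofReal_lt_top
      have hGtop : G ω = ⊤ := by
        rw [hG]
        simp only [hall]
        refine top_le_iff.1 ?_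
        calc (⊤:ℝ≥0∞) = ∑' _ : ℕ, ENNReal.ofReal (2 * t) :=
              (ENNReal.tsum_const_eq_top_of_ne_zero
                (by positivity)).symm
        _ ≤ ∑' m : ℕ, ENNReal.ofReal (t * 2^(m+1)) := by
            refine ENNReal.tsum_le_tsum fun m => ENNReal.ofReal_le_ofReal ?_
            have h2m : (1:ℝ) ≤ 2^m := one_le_pow₀ (by norm_num)
            calc 2*t = 2*t*1 := by ring
            _ ≤ 2*t*2^m := by nlinarith
            _ = t*2^(m+1) := by ring
      rw [hGtop]
      simp
    · have hex : ∃ m : ℕ, D ω ≤ ENNReal.ofReal (t * 2^(m+1)) := by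
        obtain ⟨n, hn⟩ := exists_nat_gt ((D ω).toReal / t)
        refine ⟨n, ?_⟩
        have hpow : ((n:ℝ)+1) ≤ 2^(n+1) := by
          have := Nat.lt_two_pow_self (n := n+1)
          have h2 : ((n+1:ℕ):ℝ) ≤ ((2^(n+1):ℕ):ℝ) := by exact_mod_cast this.le
          push_cast at h2
          linarith
        have h1 : (D ω).toReal ≤ t * 2^(n+1) := by
          have h3 : (D ω).toReal < n * t := by
            have := (div_lt_iff₀ ht).1 hn
            linarith
          have h4 : (n:ℝ) * t ≤ 2^(n+1) * t := by
            have : (n:ℝ) ≤ 2^(n+1) := by linarith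
            nlinarith
          nlinarith
        calc D ω = ENNReal.ofReal ((D ω).toReal) := (ENNReal.ofReal_toReal hfin).symm
        _ ≤ _ := ENNReal.ofReal_le_ofReal h1
      have hm₀ : D ω ≤ ENNReal.ofReal (t * 2^(Nat.find hex + 1)) := Nat.find_spec hex
      have hgt : ENNReal.ofReal (t * 2^(Nat.find hex)) < D ω := by
        rcases Nat.eq_zero_or_pos (Nat.find hex) with h0 | h0
        · rw [h0]
          simpa using hlt
        · have hk := Nat.find_min hex (show Nat.find hex - 1 < Nat.find hex by omega)
          have he : Nat.find hex - 1 + 1 = Nat.find hex := by omega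
          rw [he] at hk
          exact not_le.1 hk
      calc D ω ≤ ENNReal.ofReal (t * 2^(Nat.find hex + 1)) := hm₀
      _ = ({ω' | ENNReal.ofReal (t * 2^(Nat.find hex)) < D ω'}).indicator
            (fun _ => ENNReal.ofReal (t * 2^(Nat.find hex + 1))) ω :=
            (Set.indicator_of_mem (show ω ∈ {ω' | ENNReal.ofReal (t * 2^(Nat.find hex)) < D ω'}
              from hgt) (fun _ => ENNReal.ofReal (t * 2^(Nat.find hex + 1)))).symm
      _ ≤ G ω := ENNReal.le_tsum (Nat.find hex)
      _ ≤ ENNReal.ofReal t + G ω := le_add_self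
  have hGint : ∫⁻ ω, G ω ∂P ≤ ENNReal.ofReal (4 * c / t) := by
    rw [hG]
    rw [lintegral_tsum (fun m => ((measurable_const.indicator (hmeasSet _))).aemeasurable)]
    have hterm : ∀ m : ℕ, ∫⁻ ω, ({ω' | ENNReal.ofReal (t * 2^m) < D ω'}).indicator
        (fun _ => ENNReal.ofReal (t * 2^(m+1))) ω ∂P
        ≤ ENNReal.ofReal (4 * c / t) * (ENNReal.ofReal (1/2))^(m+1) := by
      intro m
      rw [lintegral_indicator_const (hmeasSet _)]
      have hb := hw (t * 2^m) (by positivity)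
      calc ENNReal.ofReal (t * 2^(m+1)) * P {ω | ENNReal.ofReal (t * 2^m) < D ω}
          ≤ ENNReal.ofReal (t * 2^(m+1)) * ENNReal.ofReal (c / (t * 2^m)^2) :=
            mul_le_mul_right hb _
      _ = ENNReal.ofReal ((t * 2^(m+1)) * (c / (t * 2^m)^2)) :=
            (ENNReal.ofReal_mul (by positivity)).symm
      _ = ENNReal.ofReal ((4 * c / t) * (1/2)^(m+1)) := by
            congr 1
            have h2m : (2:ℝ)^m ≠ 0 := by positivity
            field_simp
            rw [one_div_pow, mul_one_div, eq_div_iff (by positivity)]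
            ring
      _ = ENNReal.ofReal (4 * c / t) * (ENNReal.ofReal (1/2))^(m+1) := by
            rw [ENNReal.ofReal_mul (by positivity), ENNReal.ofReal_pow (by norm_num)]
    refine le_trans (ENNReal.tsum_le_tsum hterm) ?_
    rw [ENNReal.tsum_mul_left]
    have hhalf : ENNReal.ofReal (1/2 : ℝ) = 2⁻¹ := by
      rw [show (1/2 : ℝ) = (2:ℝ)⁻¹ by norm_num, ENNReal.ofReal_inv_of_pos (by norm_num)]
      norm_num
    have hgeo : (∑' m : ℕ, (ENNReal.ofReal (1/2))^(m+1)) = 1 := by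
      rw [hhalf, ENNReal.tsum_geometric_add_one, ENNReal.one_sub_inv_two, inv_inv]
      exact ENNReal.inv_mul_cancel two_ne_zero ENNReal.ofNat_ne_top
    rw [hgeo, mul_one]
  calc ∫⁻ ω, D ω ∂P ≤ ∫⁻ ω, (ENNReal.ofReal t + G ω) ∂P := lintegral_mono hpt
  _ = ENNReal.ofReal t + ∫⁻ ω, G ω ∂P := by
      rw [lintegral_add_left measurable_const, lintegral_const, measure_univ, mul_one]
  _ ≤ ENNReal.ofReal t + ENNReal.ofReal (4 * c / t) := add_le_add le_rfl hGint

lemma master_as_summable (hPT : MeasurePreserving T P P) (hF₀ : F₀ ≤ F)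
    (hfil : F₀ ≤ F₀.comap T) (f : ℕ → Ω → ℝ) (hf : ∀ k, MemLp (f k) 2 P)
    (hsum : Summable fun k => (eLpNorm (f k) 2 P).toReal) :
    ∀ᵐ ω ∂P, (∑' k : ℕ, (⨆ N : ℕ, ENNReal.ofReal
        ((∑ j ∈ Finset.Icc 1 (N + 1), (P[fun z => (f k (T^[j] z)) ^ 2|F₀]) ω) / (N + 1)))
      ^ (1 / 2 : ℝ)) < ⊤ := by
  classical
  set D : ℕ → Ω → ℝ≥0∞ := fun k ω => (⨆ N : ℕ, ENNReal.ofReal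
      ((∑ j ∈ Finset.Icc 1 (N + 1), (P[fun z => (f k (T^[j] z)) ^ 2|F₀]) ω) / (N + 1)))
      ^ (1 / 2 : ℝ) with hD
  have hDm : ∀ k, Measurable[F] (D k) := by
    intro k
    apply ENNReal.continuous_rpow_const.measurable.comp
    apply Measurable.iSup
    intro N
    apply Measurable.ennreal_ofReal
    exact (Finset.measurable_sum _ fun j _ =>
      (stronglyMeasurable_condExp.mono hF₀).measurable).div_const _
  have hweak : ∀ k, ∀ t : ℝ, 0 < t → P {ω | ENNReal.ofReal t < D k ω}
      ≤ ENNReal.ofReal ((∫ ω, (f k ω)^2 ∂P) / t^2) := by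
    intro k t ht
    have hsub : {ω | ENNReal.ofReal t < D k ω} ⊆ {ω | ENNReal.ofReal (t^2) < ⨆ N : ℕ,
        ENNReal.ofReal ((∑ j ∈ Finset.Icc 1 (N + 1),
          (P[fun z => (f k (T^[j] z)) ^ 2|F₀]) ω) / (N + 1))} := by
      intro ω hω
      simp only [Set.mem_setOf_eq] at hω ⊢
      have h1 : (ENNReal.ofReal t) ^ (2:ℝ) < (D k ω) ^ (2:ℝ) :=
        ENNReal.rpow_lt_rpow hω (by norm_num)
      have h2 : (D k ω) ^ (2:ℝ) = ⨆ N : ℕ, ENNReal.ofReal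
          ((∑ j ∈ Finset.Icc 1 (N + 1),
            (P[fun z => (f k (T^[j] z)) ^ 2|F₀]) ω) / (N + 1)) := by
        rw [hD]
        rw [← ENNReal.rpow_mul]
        norm_num
      have h3 : (ENNReal.ofReal t) ^ (2:ℝ) = ENNReal.ofReal (t^2) := by
        rw [ENNReal.ofReal_rpow_of_nonneg ht.le (by norm_num)]
        congr 1
        rw [show (2:ℝ) = ((2:ℕ):ℝ) by norm_num, Real.rpow_natCast]
      rw [h2, h3] at h1
      exact h1
    refine le_trans (measure_mono hsub) ?_
    exact hopf_weak_bound hPT hF₀ hfil (hf k).integrable_sq (fun ω => sq_nonneg _)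
      (by positivity)
  have hbound : ∀ k, ∫⁻ ω, D k ω ∂P
      ≤ ENNReal.ofReal (5 * (eLpNorm (f k) 2 P).toReal) := by
    intro k
    set σ : ℝ := (eLpNorm (f k) 2 P).toReal with hσ
    have hσ0 : 0 ≤ σ := ENNReal.toReal_nonneg
    have hcσ : ∫ ω, (f k ω)^2 ∂P = σ^2 := integral_sq_eq_sq_eLpNorm (hf k)
    have hw : ∀ t : ℝ, 0 < t → P {ω | ENNReal.ofReal t < D k ω}
        ≤ ENNReal.ofReal (σ^2 / t^2) := by
      intro t ht
      rw [← hcσ]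
      exact hweak k t ht
    rcases eq_or_lt_of_le hσ0 with h0 | hpos
    · -- σ = 0
      have hz : ∀ n : ℕ, ∫⁻ ω, D k ω ∂P ≤ ENNReal.ofReal (1/(n+1 : ℝ)) := by
        intro n
        have := lintegral_le_of_weak_sq (hDm k) (sq_nonneg σ) hw
          (t := 1/(n+1:ℝ)) (by positivity)
        have hc0 : σ^2 = 0 := by rw [← h0]; ring
        rw [hc0] at this
        simpa using this
      have htend : Tendsto (fun n : ℕ => ENNReal.ofReal (1/(n+1 : ℝ))) atTop (𝓝 0) := by
        rw [← ENNReal.ofReal_zero]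
        exact ENNReal.tendsto_ofReal tendsto_one_div_add_atTop_nhds_zero_nat
      have hle0 : ∫⁻ ω, D k ω ∂P ≤ 0 := ge_of_tendsto' htend hz
      refine le_trans hle0 zero_le
    · -- 0 < σ
      have hb := lintegral_le_of_weak_sq (hDm k) (sq_nonneg σ) hw (t := σ) hpos
      have he : 4 * σ^2 / σ = 4 * σ := by field_simp
      rw [he] at hb
      refine le_trans hb ?_
      rw [← ENNReal.ofReal_add hσ0 (by positivity)]
      apply ENNReal.ofReal_le_ofReal
      linarith
  have hsum5 : Summable (fun k => 5 * (eLpNorm (f k) 2 P).toReal) := hsum.mul_left 5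
  have hint : ∫⁻ ω, (∑' k, D k ω) ∂P ≤ ∑' k, ENNReal.ofReal (5 * (eLpNorm (f k) 2 P).toReal) := by
    rw [lintegral_tsum (fun k => (hDm k).aemeasurable)]
    exact ENNReal.tsum_le_tsum hbound
  have hne : (∑' k, ENNReal.ofReal (5 * (eLpNorm (f k) 2 P).toReal)) ≠ ⊤ := by
    rw [← ENNReal.ofReal_tsum_of_nonneg (fun k => by positivity) hsum5]
    exact ENNReal.ofReal_ne_top
  exact ae_lt_top (Measurable.ennreal_tsum hDm) (lt_of_le_of_lt hint hne.lt_top).ne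

end AuxHopf

section Main

variable {Ω : Type*} {F₀ : MeasurableSpace Ω} {F : MeasurableSpace Ω} {P : Measure Ω}
  [IsProbabilityMeasure P] {T : Ω → Ω}

theorem stmt_17_aux (T' : Ω → Ω) (hPT : MeasurePreserving T P P) (hT' : Measurable T')
    (hF₀ : F₀ ≤ F) (hfil : F₀ ≤ F₀.comap T)
    (X₀ : Ω → ℝ) (hX₀2 : MemLp X₀ 2 P)
    (g h : ℕ → Ω → ℝ)
    (hg : ∀ a, g a = (P[fun z => X₀ (T^[a] z) | F₀])
        - (P[fun z => X₀ (T^[a] z) | F₀.comap T']))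
    (hh : ∀ a, h a = (P[fun z => X₀ (T^[a + 1] z) - X₀ (T^[a] z) | F₀])
        - (P[fun z => X₀ (T^[a + 1] z) - X₀ (T^[a] z) | F₀.comap T'])) :
    ((Summable fun a : ℕ => (eLpNorm (h a) 2 P).toReal) →
      ∀ r : ℕ, ∀ᵐ ω ∂P,
        (∑' k : ℕ, (⨆ N : ℕ, ENNReal.ofReal
            ((∑ j ∈ Finset.Icc 1 (N + 1),
              (P[fun z => (h (k + 1 + r) (T^[j] z)) ^ 2 | F₀]) ω) / (N + 1)))
          ^ (1 / 2 : ℝ)) < ⊤) ∧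
    ((Summable fun a : ℕ => (eLpNorm (g a) 2 P).toReal) →
      ∀ r : ℕ, ∀ᵐ ω ∂P,
        (∑' k : ℕ, (⨆ N : ℕ, ENNReal.ofReal
            ((∑ j ∈ Finset.Icc 1 (N + 1),
              (P[fun z => (g (k + 1 + r) (T^[j] z)) ^ 2 | F₀]) ω) / (N + 1)))
          ^ (1 / 2 : ℝ)) < ⊤) := by
  have hT'le : F₀.comap T' ≤ F := comap_le_of_measurable hF₀ hT'
  have hX₀a : ∀ a : ℕ, MemLp (fun z => X₀ (T^[a] z)) 2 P := fun a =>
    hX₀2.comp_measurePreserving (hPT.iterate a)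
  have hg2 : ∀ a, MemLp (g a) 2 P := by
    intro a
    rw [hg a]
    exact (memLp_two_condExp hF₀ (hX₀a a)).sub (memLp_two_condExp hT'le (hX₀a a))
  have hh2 : ∀ a, MemLp (h a) 2 P := by
    intro a
    rw [hh a]
    have hd : MemLp (fun z => X₀ (T^[a+1] z) - X₀ (T^[a] z)) 2 P :=
      (hX₀a (a+1)).sub (hX₀a a)
    exact (memLp_two_condExp hF₀ hd).sub (memLp_two_condExp hT'le hd)
  constructor
  · intro hsum r
    have hsum' : Summable (fun k : ℕ => (eLpNorm (h (k + 1 + r)) 2 P).toReal) := by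
      have h1 := (summable_nat_add_iff
        (f := fun a => (eLpNorm (h a) 2 P).toReal) (1+r)).2 hsum
      exact h1.congr (fun k => by rw [← add_assoc])
    exact master_as_summable hPT hF₀ hfil (fun k => h (k + 1 + r))
      (fun k => hh2 _) hsum'
  · intro hsum r
    have hsum' : Summable (fun k : ℕ => (eLpNorm (g (k + 1 + r)) 2 P).toReal) := by
      have h1 := (summable_nat_add_iff
        (f := fun a => (eLpNorm (g a) 2 P).toReal) (1+r)).2 hsum
      exact h1.congr (fun k => by rw [← add_assoc])
    exact master_as_summable hPT hF₀ hfil (fun k => g (k + 1 + r))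
      (fun k => hg2 _) hsum'

end Main

/-- under the weak Hannan condition `Σ ‖P₀(X_{n+1}−X_n)‖₂ < ∞` the series
`Σ_k (sup_N (1/N) Σ_{j=1}^N E₀T^j(P₀(X_{k+r+1}−X_{k+r}))²)^{1/2}` converges `P`-a.s.
(for each `r`), and under the Hannan condition `Σ ‖P₀X_n‖₂ < ∞` the analogous series
with `P₀X_{k+r}` converges `P`-a.s. -/
theorem stmt_17 {Ω : Type*} {F : MeasurableSpace Ω}
    (P : Measure Ω) [IsProbabilityMeasure P]
    (T T' : Ω → Ω) (hT : Ergodic T P) (hT' : Measurable T')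
    (hinv1 : Function.LeftInverse T' T) (hinv2 : Function.RightInverse T' T)
    (F₀ : MeasurableSpace Ω) (hF₀ : F₀ ≤ F) (hfil : F₀ ≤ F₀.comap T)
    (X₀ : Ω → ℝ) (hX₀m : Measurable[F₀] X₀) (hX₀2 : MemLp X₀ 2 P)
    -- `g a = P₀ X_a` and `h a = P₀ (X_{a+1} − X_a)`
    (g h : ℕ → Ω → ℝ)
    (hg : ∀ a, g a = (P[fun z => X₀ (T^[a] z) | F₀])
        - (P[fun z => X₀ (T^[a] z) | F₀.comap T']))
    (hh : ∀ a, h a = (P[fun z => X₀ (T^[a + 1] z) - X₀ (T^[a] z) | F₀])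
        - (P[fun z => X₀ (T^[a + 1] z) - X₀ (T^[a] z) | F₀.comap T'])) :
    -- weak Hannan condition ⇒ a.s. convergence of the difference series
    ((Summable fun a : ℕ => (eLpNorm (h a) 2 P).toReal) →
      ∀ r : ℕ, ∀ᵐ ω ∂P,
        (∑' k : ℕ, (⨆ N : ℕ, ENNReal.ofReal
            ((∑ j ∈ Finset.Icc 1 (N + 1),
              (P[fun z => (h (k + 1 + r) (T^[j] z)) ^ 2 | F₀]) ω) / (N + 1)))
          ^ (1 / 2 : ℝ)) < ⊤) ∧
    -- Hannan condition ⇒ a.s. convergence of the series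
    ((Summable fun a : ℕ => (eLpNorm (g a) 2 P).toReal) →
      ∀ r : ℕ, ∀ᵐ ω ∂P,
        (∑' k : ℕ, (⨆ N : ℕ, ENNReal.ofReal
            ((∑ j ∈ Finset.Icc 1 (N + 1),
              (P[fun z => (g (k + 1 + r) (T^[j] z)) ^ 2 | F₀]) ω) / (N + 1)))
          ^ (1 / 2 : ℝ)) < ⊤) :=
  stmt_17_aux T' hT.toMeasurePreserving hT' hF₀ hfil X₀ hX₀2 g h hg hh
end
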